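/- arXiv:1503.02977 — 5 statements merged into one kernel-verified Lean document; each statement's English description precedes it below -/
import Mathlib

section
/- For every n ≥ 1 and every s = (s₁,…,sₙ) ∈ ℂⁿ, the multiple series ∑_{m₁>m₂>⋯>mₙ>0} ∏_{i=1}^n m_i^{-s_i} (sum over strictly decreasing n-tuples of positive integers) converges absolutely if and only if ∑_{j=1}^k Re(s_j) > k for every k = 1,…,n; that is, the family (m₁,…,mₙ) ↦ ∏ m_i^{-s_i} indexed by {(m₁,…,mₙ) ∈ ℕⁿ : m₁ > m₂ > ⋯ > mₙ > 0} is summable precisely on this domain. -/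
/-!
Taking norms reduces everything to the real exponents `σ = Re s`.

If `∑_{j ≤ k} σ_j > k + 1` for all `k`, then even `∑_{j ≤ k} σ_j ≥ (k + 1)(1 + δ)` for some
`δ > 0`. Along a decreasing tuple the weights `log mᵢ` are nonnegative and decreasing, so Abel
summation gives `∏ mᵢ^{-σᵢ} ≤ ∏ mᵢ^{-(1+δ)}`, and the right side is summable over all of `ℕⁿ`.

Conversely, if `∑_{j ≤ k} σ_j ≤ k + 1`, take the box of tuples with `mᵢ ∈ [(n - i)M, (n - i + 1)M)`
for `i ≤ k` and `mᵢ = n - i` for `i > k`. Its `M^{k+1}` points are strictly decreasing tuples whose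
terms are all `≫ M^{-∑_{j ≤ k} σ_j}`, so its total mass is bounded below independently of `M`;
as `M → ∞` these boxes leave every finite set, contradicting summability.
-/

open Finset Filter Topology

theorem Fin.sum_mul_le_sum_mul_of_sum_Iic_le {R : Type*} [CommRing R] [LinearOrder R]
    [IsStrictOrderedRing R] :
    ∀ {n : ℕ} {a b L : Fin n → R}, Antitone L → (∀ i, 0 ≤ L i) →
      (∀ k, ∑ j ∈ Iic k, a j ≤ ∑ j ∈ Iic k, b j) → ∑ i, a i * L i ≤ ∑ i, b i * L i
  | 0, _, _, _, _, _, _ => by simp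
  | n + 1, a, b, L, hL, hL0, h => by
    set c := L (last n)
    -- subtracting the last weight `c` from every weight kills the last term
    have hshift : ∀ x : Fin (n + 1) → R, ∑ i, x i * L i =
        ∑ i : Fin n, x i.castSucc * (L i.castSucc - c) + c * ∑ j ∈ Iic (last n), x j := by
      intro x
      rw [← top_eq_last, Iic_top, Finset.mul_sum, ← sub_eq_iff_eq_add, ← Finset.sum_sub_distrib]
      simp [Fin.sum_univ_castSucc, c, mul_sub, mul_comm]
    rw [hshift a, hshift b]
    gcongr ?_ + c * ?_
    · refine Fin.sum_mul_le_sum_mul_of_sum_Iic_le (fun i j hij => ?_) (fun i => ?_) (fun k => ?_)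
      · exact sub_le_sub_right (hL (Fin.castSucc_le_castSucc_iff.2 hij)) c
      · exact sub_nonneg.2 (hL (Fin.le_last _))
      · simpa only [Fin.sum_Iic_castSucc] using h k.castSucc
    · exact hL0 _
    · exact h _

theorem prod_rpow_neg_le_prod_rpow_neg_of_sum_Iic_le {n : ℕ} {σ τ : Fin n → ℝ} {m : Fin n → ℕ}
    (hm : Antitone m) (hpos : ∀ i, 0 < m i) (h : ∀ k, ∑ j ∈ Iic k, τ j ≤ ∑ j ∈ Iic k, σ j) :
    ∏ i, (m i : ℝ) ^ (-σ i) ≤ ∏ i, (m i : ℝ) ^ (-τ i) := by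
  have hm0 : ∀ i, (0 : ℝ) < m i := fun i => Nat.cast_pos.2 (hpos i)
  have hlog : ∑ i, τ i * Real.log (m i) ≤ ∑ i, σ i * Real.log (m i) :=
    Fin.sum_mul_le_sum_mul_of_sum_Iic_le
      (fun i j hij => Real.log_le_log (hm0 j) (Nat.cast_le.2 (hm hij)))
      (fun i => Real.log_nonneg (Nat.one_le_cast.2 (hpos i))) h
  simp only [Real.rpow_def_of_pos (hm0 _), ← Real.exp_sum, Real.exp_le_exp, mul_neg,
    sum_neg_distrib, neg_le_neg_iff]
  simpa only [mul_comm] using hlog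

theorem summable_fintype_prod_of_nonneg {ι κ : Type*} [Fintype ι] {f : ι → κ → ℝ}
    (hf0 : ∀ i x, 0 ≤ f i x) (hf : ∀ i, Summable (f i)) :
    Summable fun x : ι → κ => ∏ i, f i (x i) := by
  classical
  refine summable_of_sum_le (c := ∏ i, ∑' y, f i y)
    (fun x => prod_nonneg fun i _ => hf0 i (x i)) fun T => ?_
  calc ∑ x ∈ T, ∏ i, f i (x i)
      ≤ ∑ x ∈ Fintype.piFinset fun i => T.image (· i), ∏ i, f i (x i) :=
        sum_le_sum_of_subset_of_nonneg (fun x hx => Fintype.mem_piFinset.2 fun i =>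
          mem_image_of_mem _ hx) fun x _ _ => prod_nonneg fun i _ => hf0 i (x i)
    _ = ∏ i, ∑ y ∈ T.image (· i), f i y := (prod_univ_sum _ _).symm
    _ ≤ ∏ i, ∑' y, f i y := prod_le_prod (fun i _ => sum_nonneg fun y _ => hf0 i y)
        fun i _ => (hf i).sum_le_tsum _ fun y _ => hf0 i y

theorem exists_pos_forall_mul_one_add_lt {ι : Type*} [Finite ι] {x y : ι → ℝ}
    (h : ∀ i, x i < y i) : ∃ δ > 0, ∀ i, x i * (1 + δ) < y i := by
  have : ∀ᶠ δ in 𝓝[>] (0 : ℝ), 0 < δ ∧ ∀ i, x i * (1 + δ) < y i := by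
    refine eventually_mem_nhdsWithin.and (eventually_all.2 fun i => ?_)
    have hcont : Tendsto (fun δ : ℝ => x i * (1 + δ)) (𝓝[>] 0) (𝓝 (x i)) := by
      have : Continuous fun δ : ℝ => x i * (1 + δ) := by fun_prop
      simpa using (this.tendsto 0).mono_left nhdsWithin_le_nhds
    exact hcont.eventually_lt_const (h i)
  exact this.exists

theorem summable_prod_rpow_neg_of_lt_sum_Iic {n : ℕ} {σ : Fin n → ℝ}
    (h : ∀ k : Fin n, ((k : ℕ) + 1 : ℝ) < ∑ j ∈ Iic k, σ j) :
    Summable fun m : {f : Fin n → ℕ // StrictAnti f ∧ ∀ i, 0 < f i} =>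
      ∏ i, (m.1 i : ℝ) ^ (-σ i) := by
  obtain ⟨δ, hδ, hσ⟩ := exists_pos_forall_mul_one_add_lt h
  have hδsum : Summable fun f : Fin n → ℕ => ∏ i, (f i : ℝ) ^ (-(1 + δ)) :=
    summable_fintype_prod_of_nonneg (f := fun _ (x : ℕ) => (x : ℝ) ^ (-(1 + δ)))
      (fun _ _ => by positivity) fun _ => Real.summable_nat_rpow.2 (by linarith)
  refine (hδsum.comp_injective Subtype.val_injective).of_nonneg_of_le (fun _ => by positivity)
    fun m => prod_rpow_neg_le_prod_rpow_neg_of_sum_Iic_le m.2.1.antitone m.2.2 fun k => ?_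
  simpa [Fin.card_Iic, mul_one_add] using (hσ k).le

theorem Real.rpow_neg_abs_mul_rpow_le_rpow {w x C : ℝ} (p : ℝ) (hw : 0 < w) (hwx : w ≤ x)
    (hxC : x ≤ C * w) : C ^ (-|p|) * w ^ p ≤ x ^ p := by
  have hx : 0 < x := hw.trans_le hwx
  have hC : 1 ≤ C := by nlinarith
  rcases le_total 0 p with hp | hp
  · calc C ^ (-|p|) * w ^ p ≤ 1 * w ^ p := by
          gcongr; exact Real.rpow_le_one_of_one_le_of_nonpos hC (by simp)
      _ ≤ x ^ p := by rw [one_mul]; gcongr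
  · calc C ^ (-|p|) * w ^ p = (C * w) ^ p := by
          rw [abs_of_nonpos hp, neg_neg, Real.mul_rpow (by linarith) hw.le]
      _ ≤ x ^ p := Real.rpow_le_rpow_of_nonpos hx hxC hp

def descendingBox {n : ℕ} (w : Fin n → ℕ) : Finset (Fin n → ℕ) :=
  Fintype.piFinset fun i => Ico ((n - i) * w i) ((n - i + 1) * w i)

theorem card_descendingBox {n : ℕ} (w : Fin n → ℕ) : #(descendingBox w) = ∏ i, w i := by
  simp [descendingBox, Nat.card_Ico, add_mul]

theorem mem_descendingBox {n : ℕ} {w : Fin n → ℕ} {f : Fin n → ℕ} :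
    f ∈ descendingBox w ↔ ∀ i, (n - i) * w i ≤ f i ∧ f i < (n - i + 1) * w i := by
  simp [descendingBox]

theorem strictAnti_of_mem_descendingBox {n : ℕ} {w : Fin n → ℕ} (hw : Antitone w)
    {f : Fin n → ℕ} (hf : f ∈ descendingBox w) : StrictAnti f := by
  rw [mem_descendingBox] at hf
  intro i j hij
  have hij' : n - j + 1 ≤ n - i := by have := j.isLt; have : (i : ℕ) < j := hij; omega
  calc f j < (n - j + 1) * w j := (hf j).2
    _ ≤ (n - i) * w i := Nat.mul_le_mul hij' (hw hij.le)
    _ ≤ f i := (hf i).1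

theorem le_of_mem_descendingBox {n : ℕ} {w : Fin n → ℕ} {f : Fin n → ℕ}
    (hf : f ∈ descendingBox w) (i : Fin n) : w i ≤ f i ∧ f i ≤ (n + 1) * w i := by
  obtain ⟨hlo, hhi⟩ := mem_descendingBox.1 hf i
  have hi : 1 ≤ n - i := by have := i.isLt; omega
  exact ⟨le_trans (Nat.le_mul_of_pos_left _ hi) hlo,
    hhi.le.trans (Nat.mul_le_mul_right _ (by omega))⟩

theorem prod_ite_le_rpow {n : ℕ} (k : Fin n) {M : ℝ} (hM : 0 < M) (p : Fin n → ℝ) :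
    ∏ i, (if i ≤ k then M else 1) ^ p i = M ^ ∑ i ∈ Iic k, p i := by
  rw [Real.rpow_sum_of_pos hM, ← filter_ge_eq_Iic, prod_filter]
  exact prod_congr rfl fun i _ => by split_ifs <;> simp

theorem le_sum_prod_rpow_neg_descendingBox {n : ℕ} (σ : Fin n → ℝ) (k : Fin n) {M : ℕ}
    (hM : 0 < M) (hk : ∑ j ∈ Iic k, σ j ≤ (k : ℕ) + 1) :
    ∏ i, ((n : ℝ) + 1) ^ (-|σ i|) ≤
      ∑ f ∈ descendingBox fun i => if i ≤ k then M else 1, ∏ i, (f i : ℝ) ^ (-σ i) := by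
  set w : Fin n → ℕ := fun i => if i ≤ k then M else 1
  set c := ∏ i, ((n : ℝ) + 1) ^ (-|σ i|)
  have hw : ∀ i, (0 : ℝ) < w i := fun i => by positivity
  have hM1 : (1 : ℝ) ≤ M := Nat.one_le_cast.2 hM
  have hterm : ∀ f ∈ descendingBox w, c * ∏ i, (w i : ℝ) ^ (-σ i) ≤ ∏ i, (f i : ℝ) ^ (-σ i) := by
    intro f hf
    rw [← prod_mul_distrib]
    refine prod_le_prod (fun i _ => by positivity) fun i _ => ?_
    obtain ⟨hlo, hhi⟩ := le_of_mem_descendingBox hf i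
    simpa only [abs_neg] using Real.rpow_neg_abs_mul_rpow_le_rpow (-σ i) (hw i)
      (Nat.cast_le.2 hlo) (by exact_mod_cast hhi)
  calc c ≤ c * (M : ℝ) ^ ∑ j ∈ Iic k, (1 - σ j) := by
        refine le_mul_of_one_le_right (by positivity) (Real.one_le_rpow hM1 ?_)
        simp only [sum_sub_distrib, sum_const, Fin.card_Iic, nsmul_eq_mul, mul_one]
        push_cast
        linarith
    _ = c * ∏ i, (w i : ℝ) * (w i : ℝ) ^ (-σ i) := by
        rw [← prod_ite_le_rpow k (by positivity)]
        refine congrArg _ (prod_congr rfl fun i _ => ?_)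
        have hwi : (if i ≤ k then (M : ℝ) else 1) = w i := by simp only [w]; split_ifs <;> simp
        rw [hwi, sub_eq_add_neg, Real.rpow_add (hw i), Real.rpow_one]
    _ = #(descendingBox w) • (c * ∏ i, (w i : ℝ) ^ (-σ i)) := by
        rw [card_descendingBox, nsmul_eq_mul, Nat.cast_prod, prod_mul_distrib]
        ring
    _ ≤ ∑ f ∈ descendingBox w, ∏ i, (f i : ℝ) ^ (-σ i) := card_nsmul_le_sum _ _ _ hterm

theorem lt_sum_Iic_of_summable_prod_rpow_neg {n : ℕ} {σ : Fin n → ℝ}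
    (hσ : Summable fun m : {f : Fin n → ℕ // StrictAnti f ∧ ∀ i, 0 < f i} =>
      ∏ i, (m.1 i : ℝ) ^ (-σ i)) (k : Fin n) :
    ((k : ℕ) + 1 : ℝ) < ∑ j ∈ Iic k, σ j := by
  classical
  by_contra! hk
  set c := ∏ i, ((n : ℝ) + 1) ^ (-|σ i|)
  obtain ⟨s, hs⟩ := hσ.vanishing (Iio_mem_nhds (show 0 < c by positivity))
  set M := s.sup (fun m => m.1 k) + 1
  set w : Fin n → ℕ := fun i => if i ≤ k then M else 1
  have hw : Antitone w := fun i j hij => by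
    simp only [w]
    split_ifs <;> omega
  have hbox : ∀ f ∈ descendingBox w, StrictAnti f ∧ ∀ i, 0 < f i := fun f hf =>
    ⟨strictAnti_of_mem_descendingBox hw hf, fun i =>
      lt_of_lt_of_le (by simp only [w]; split_ifs <;> omega) (le_of_mem_descendingBox hf i).1⟩
  have hdisj : Disjoint ((descendingBox w).subtype _) s := by
    refine disjoint_left.2 fun m hm hms => ?_
    have hle : m.1 k ≤ s.sup (fun m => m.1 k) := le_sup (f := fun m => m.1 k) hms
    have hge : w k ≤ m.1 k := (le_of_mem_descendingBox (mem_subtype.1 hm) k).1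
    simp only [w, le_refl, if_true] at hge
    omega
  have hsmall := hs _ hdisj
  rw [sum_subtype_of_mem (fun f : Fin n → ℕ => ∏ i, (f i : ℝ) ^ (-σ i)) hbox] at hsmall
  exact (le_sum_prod_rpow_neg_descendingBox σ k (by omega : 0 < M) hk).not_gt hsmall

theorem stmt_0_general (n : ℕ) (s : Fin n → ℂ) :
    Summable (fun m : {f : Fin n → ℕ // StrictAnti f ∧ ∀ i, 0 < f i} =>
      ∏ i, ((m.1 i : ℂ) ^ (-(s i)))) ↔
    ∀ k : Fin n, ((k : ℕ) + 1 : ℝ) < ∑ j ∈ Finset.Iic k, (s j).re := by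
  have hnorm : ∀ m : {f : Fin n → ℕ // StrictAnti f ∧ ∀ i, 0 < f i},
      ‖∏ i, (m.1 i : ℂ) ^ (-(s i))‖ = ∏ i, (m.1 i : ℝ) ^ (-(s i).re) := fun m => by
    simp only [norm_prod, Complex.norm_natCast_cpow_of_pos (m.2.2 _), Complex.neg_re]
  rw [← summable_norm_iff, summable_congr hnorm]
  exact ⟨lt_sum_Iic_of_summable_prod_rpow_neg, summable_prod_rpow_neg_of_lt_sum_Iic⟩

/-- The multiple series `∑_{m₁ > m₂ > ⋯ > mₙ > 0} ∏ᵢ mᵢ^{-sᵢ}` (with `mᵢ^{-sᵢ}` the complex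
power) converges absolutely — i.e. the family indexed by strictly decreasing `n`-tuples of
positive integers is summable — if and only if `∑_{j=1}^k Re(s_j) > k` for every `k = 1,…,n`. -/
theorem stmt_0 (n : ℕ) (hn : 1 ≤ n) (s : Fin n → ℂ) :
    Summable (fun m : {f : Fin n → ℕ // StrictAnti f ∧ ∀ i, 0 < f i} =>
      ∏ i, ((m.1 i : ℂ) ^ (-(s i)))) ↔
    ∀ k : Fin n, ((k : ℕ) + 1 : ℝ) < ∑ j ∈ Finset.Iic k, (s j).re :=
  stmt_0_general n s
end

section
/- For every n ≥ 1 and all integers k₁,…,kₙ ∈ ℤ, the evaluation at t = q of the nested expression P_q^{k₁}(y · P_q^{k₂}(y · ⋯ P_q^{kₙ}(y)⋯)) ∈ A equals, in ℚ[[q]], the modified q-multiple zeta value ∑_{m₁ > m₂ > ⋯ > mₙ > 0} q^{m₁} · ∏_{i=1}^n (1−q^{m_i})^{-k_i}, where (1−q^{m_i})^{-k_i} is the k_i-th integer power of the unit 1−q^{m_i} in ℚ[[q]] and the sum converges in the q-adic topology. -/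
/-- `A = (ℚ[[q]])[[t]]`: power series in `t` with coefficients in `ℚ[[q]]`. -/
abbrev A := PowerSeries (PowerSeries ℚ)

/-- `P_q(∑_{m≥1} aₘ(q) tᵐ) = ∑_{m≥1} aₘ(q)·(1−qᵐ)⁻¹ tᵐ`. -/
noncomputable def Pq (f : A) : A :=
  PowerSeries.mk fun m =>
    if m = 0 then 0
    else PowerSeries.coeff (R := PowerSeries ℚ) m f * (1 - (PowerSeries.X : PowerSeries ℚ) ^ m)⁻¹

/-- `D_q(∑_{m≥1} aₘ(q) tᵐ) = ∑_{m≥1} (1−qᵐ)·aₘ(q) tᵐ`. -/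
noncomputable def Dq (f : A) : A :=
  PowerSeries.mk fun m =>
    (1 - (PowerSeries.X : PowerSeries ℚ) ^ m) * PowerSeries.coeff (R := PowerSeries ℚ) m f

/-- `Pz k` is the `k`-fold iterate of `P_q` for `k ≥ 0` and the `(−k)`-fold iterate of
`D_q` for `k < 0`. -/
noncomputable def Pz : ℤ → A → A
  | Int.ofNat k => Pq^[k]
  | Int.negSucc k => Dq^[k + 1]

/-- `y = ∑_{m≥1} tᵐ ∈ A`. -/
noncomputable def yq : A :=
  PowerSeries.mk fun m => if m = 0 then 0 else 1

/-- The nested expression `P_q^{k₁}(y · P_q^{k₂}(y ⋯ P_q^{kₙ}(y)⋯)) ∈ A`. -/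
noncomputable def nestq : (n : ℕ) → (Fin n → ℤ) → A
  | 0, _ => 1
  | n + 1, ks => Pz (ks 0) (yq * nestq n fun i => ks i.succ)

/-- Evaluation at `t = q`, sending `∑_{m≥1} aₘ(q) tᵐ` to `∑_{m≥1} aₘ(q)·qᵐ ∈ ℚ[[q]]`. -/
noncomputable def evq (f : A) : PowerSeries ℚ :=
  PowerSeries.mk fun N =>
    ∑ m ∈ Finset.Icc 1 N, PowerSeries.coeff (R := ℚ) (N - m) (PowerSeries.coeff (R := PowerSeries ℚ) m f)

/-- Integer power of a power series: `a ^ k` for `k ≥ 0` and `(a⁻¹) ^ (−k)` for `k < 0`. -/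
noncomputable def zpu (a : PowerSeries ℚ) (k : ℤ) : PowerSeries ℚ :=
  if 0 ≤ k then a ^ k.toNat else (a⁻¹) ^ (-k).toNat

/-!
`P_q^k` multiplies the `tᵐ`-coefficient by `(1 - qᵐ)^{-k}`, and multiplication by `y` replaces
the `tᵐ`-coefficient by the sum of all coefficients of lower degree. By induction on `n`, the
`tᵐ`-coefficient of `P_q^{k₁}(y ⋯ P_q^{kₙ}(y))` is therefore the sum of
`∏ᵢ (1 - q^{mᵢ})^{-kᵢ}` over the chains `m = m₁ > ⋯ > mₙ > 0`. Evaluation at `t = q` multiplies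
it by `qᵐ` and sums over `m`; the coefficient of `q^N` only sees the finitely many chains with
`m₁ ≤ N`, which is also why the `q`-adic sum on the right is a finite sum coefficientwise.
-/

open PowerSeries Finset

namespace QMZV

-- Also true for `m = 0`, where both sides vanish because `0⁻¹ = 0` in `ℚ⟦X⟧`.
lemma coeff_Pq (f : A) (m : ℕ) : coeff m (Pq f) = (1 - (X : ℚ⟦X⟧) ^ m)⁻¹ * coeff m f := by
  rcases eq_or_ne m 0 with rfl | hm
  · simp [Pq]
  · simp [Pq, hm, mul_comm]

lemma coeff_Dq (f : A) (m : ℕ) : coeff m (Dq f) = (1 - (X : ℚ⟦X⟧) ^ m) * coeff m f := by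
  simp [Dq]

lemma coeff_Pq_iterate (j : ℕ) (f : A) (m : ℕ) :
    coeff m (Pq^[j] f) = ((1 - (X : ℚ⟦X⟧) ^ m)⁻¹) ^ j * coeff m f := by
  induction j with
  | zero => simp
  | succ j ih => rw [Function.iterate_succ_apply', coeff_Pq, ih]; ring

lemma coeff_Dq_iterate (j : ℕ) (f : A) (m : ℕ) :
    coeff m (Dq^[j] f) = (1 - (X : ℚ⟦X⟧) ^ m) ^ j * coeff m f := by
  induction j with
  | zero => simp
  | succ j ih => rw [Function.iterate_succ_apply', coeff_Dq, ih]; ring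

lemma zpu_natCast (a : ℚ⟦X⟧) (j : ℕ) : zpu a j = a ^ j := by
  simp [zpu]

lemma zpu_neg_natCast (a : ℚ⟦X⟧) (j : ℕ) : zpu a (-j) = a⁻¹ ^ j := by
  rcases eq_or_ne j 0 with rfl | hj
  · simp [zpu]
  · simp [zpu, hj]

lemma coeff_Pz (k : ℤ) (f : A) (m : ℕ) :
    coeff m (Pz k f) = zpu (1 - (X : ℚ⟦X⟧) ^ m) (-k) * coeff m f := by
  cases k with
  | ofNat j => rw [Int.ofNat_eq_natCast, zpu_neg_natCast]; exact coeff_Pq_iterate j f m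
  | negSucc j => rw [Int.neg_negSucc, zpu_natCast]; exact coeff_Dq_iterate _ f m

lemma coeff_yq_mul (g : A) (m : ℕ) : coeff m (yq * g) = ∑ b ∈ range m, coeff b g := by
  rw [coeff_mul, Nat.sum_antidiagonal_eq_sum_range_succ (fun i j => coeff i yq * coeff j g),
    sum_range_succ', ← sum_range_reflect]
  refine (add_eq_left.mpr (by simp [yq])).trans (sum_congr rfl fun b hb => ?_)
  rw [mem_range] at hb
  simp [yq, show m - (m - 1 - b + 1) = b by omega]

open Classical in
noncomputable def chainsFrom (n m : ℕ) : Finset (Fin (n + 1) → ℕ) :=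
  {f ∈ Fintype.piFinset fun _ => range (m + 1) | StrictAnti f ∧ (∀ i, 0 < f i) ∧ f 0 = m}

lemma mem_chainsFrom {n m : ℕ} {f : Fin (n + 1) → ℕ} :
    f ∈ chainsFrom n m ↔ StrictAnti f ∧ (∀ i, 0 < f i) ∧ f 0 = m := by
  refine mem_filter.trans (and_iff_right_of_imp fun ⟨hf, _, hf0⟩ => ?_)
  exact Fintype.mem_piFinset.mpr fun i =>
    mem_range.mpr <| hf0 ▸ Nat.lt_succ_of_le (hf.antitone i.zero_le)

lemma chainsFrom_pairwiseDisjoint (n : ℕ) (s : Set ℕ) : s.PairwiseDisjoint (chainsFrom n) :=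
  fun _ _ _ _ hne => disjoint_left.mpr fun _ hf hf' =>
    hne ((mem_chainsFrom.mp hf).2.2.symm.trans (mem_chainsFrom.mp hf').2.2)

lemma chainsFrom_zero (m : ℕ) : chainsFrom 0 m = if m = 0 then ∅ else {fun _ => m} := by
  ext f
  have hf : StrictAnti f := Subsingleton.strictAnti (α := Fin 1) f
  split_ifs with hm
  · simp only [mem_chainsFrom, hm, notMem_empty, iff_false, not_and]
    exact fun _ hpos h0 => (hpos 0).ne' h0
  · rw [mem_chainsFrom, mem_singleton, funext_iff, Fin.forall_fin_one, Fin.forall_fin_one]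
    exact ⟨fun h => h.2.2, fun h => ⟨hf, h ▸ Nat.pos_of_ne_zero hm, h⟩⟩

lemma chainsFrom_succ (n m : ℕ) :
    chainsFrom (n + 1) m =
      ((range m).biUnion (chainsFrom n)).map
        ⟨Fin.cons m, Fin.cons_right_injective (α := fun _ => ℕ) m⟩ := by
  ext f
  induction f using Fin.consCases with
  | cons a g =>
  have hanti : StrictAnti (Fin.cons a g : Fin (n + 2) → ℕ) ↔ g 0 < a ∧ StrictAnti g :=
    strictAnti_vecCons
  rw [mem_chainsFrom, hanti, Fin.forall_fin_succ]
  simp only [Fin.cons_zero, Fin.cons_succ, mem_map, mem_biUnion, mem_range, mem_chainsFrom,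
    Function.Embedding.coeFn_mk, Fin.cons_inj]
  constructor
  · rintro ⟨⟨hlt, hg⟩, ⟨-, hpos⟩, rfl⟩
    exact ⟨g, ⟨g 0, hlt, hg, hpos, rfl⟩, rfl, rfl⟩
  · rintro ⟨_, ⟨_, hlt, hg, hpos, rfl⟩, rfl, rfl⟩
    exact ⟨⟨hlt, hg⟩, ⟨(hpos 0).trans hlt, hpos⟩, rfl⟩

lemma sum_chainsFrom_succ {M : Type*} [AddCommMonoid M] (n m : ℕ)
    (F : (Fin (n + 2) → ℕ) → M) :
    ∑ f ∈ chainsFrom (n + 1) m, F f =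
      ∑ b ∈ range m, ∑ g ∈ chainsFrom n b, F (Fin.cons m g) := by
  rw [chainsFrom_succ, sum_map, sum_biUnion (chainsFrom_pairwiseDisjoint n _)]
  rfl

theorem coeff_nestq_succ (n : ℕ) (ks : Fin (n + 1) → ℤ) (m : ℕ) :
    coeff m (nestq (n + 1) ks) =
      ∑ f ∈ chainsFrom n m, ∏ i, zpu (1 - (X : ℚ⟦X⟧) ^ f i) (-ks i) := by
  induction n generalizing m with
  | zero =>
    rw [nestq, nestq, mul_one, coeff_Pz, chainsFrom_zero]
    split_ifs with hm <;> simp [yq, hm]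
  | succ n ih =>
    rw [nestq, coeff_Pz, coeff_yq_mul, sum_chainsFrom_succ, mul_sum]
    refine sum_congr rfl fun b _ => ?_
    rw [ih, mul_sum]
    refine sum_congr rfl fun g _ => ?_
    simp [Fin.prod_univ_succ]

theorem tsum_coeff_X_pow_mul {R : Type*} [Semiring R] [TopologicalSpace R] (n N : ℕ)
    (g : (Fin (n + 1) → ℕ) → R⟦X⟧) :
    ∑' f : {f : Fin (n + 1) → ℕ // StrictAnti f ∧ ∀ i, 0 < f i},
        coeff N (X ^ f.1 0 * g f.1) =
      ∑ m ∈ Icc 1 N, ∑ f ∈ chainsFrom n m, coeff (N - m) (g f) := by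
  classical
  set chains := (Icc 1 N).biUnion (chainsFrom n)
  have hchains : ∀ f ∈ chains, StrictAnti f ∧ ∀ i, 0 < f i := fun f hf => by
    obtain ⟨_, -, hf⟩ := mem_biUnion.mp hf
    exact (mem_chainsFrom.mp hf).imp_right And.left
  rw [tsum_eq_sum (s := chains.subtype _), sum_subtype_of_mem (fun f => coeff N (X ^ f 0 * g f))
    hchains, sum_biUnion (chainsFrom_pairwiseDisjoint n _)]
  · refine sum_congr rfl fun m hm => sum_congr rfl fun f hf => ?_
    rw [(mem_chainsFrom.mp hf).2.2, coeff_X_pow_mul', if_pos (mem_Icc.mp hm).2]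
  · rintro ⟨f, hanti, hpos⟩ hf
    have hN : N < f 0 := by
      by_contra! h
      exact hf (mem_subtype.mpr (mem_biUnion.mpr ⟨f 0, mem_Icc.mpr ⟨hpos 0, h⟩,
        mem_chainsFrom.mpr ⟨hanti, hpos, rfl⟩⟩))
    rw [coeff_X_pow_mul', if_neg hN.not_ge]

end QMZV

open QMZV in
/-- For integers `k₁,…,kₙ`, the evaluation at `t = q` of
`P_q^{k₁}(y · P_q^{k₂}(y ⋯ P_q^{kₙ}(y)⋯))` equals the modified `q`-multiple zeta value
`∑_{m₁ > ⋯ > mₙ > 0} q^{m₁}·∏ᵢ (1−q^{mᵢ})^{-kᵢ} ∈ ℚ[[q]]` (a `q`-adically convergent sum: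
its coefficient of `q^N` is the — finitely supported — sum of the `q^N`-coefficients of
the summands). -/
theorem stmt_6 (n : ℕ) (hn : 1 ≤ n) (ks : Fin n → ℤ) :
    evq (nestq n ks) =
      PowerSeries.mk fun N =>
        ∑' m : {f : Fin n → ℕ // StrictAnti f ∧ ∀ i, 0 < f i},
          PowerSeries.coeff (R := ℚ) N
            ((PowerSeries.X : PowerSeries ℚ) ^ (m.1 ⟨0, hn⟩) *
              ∏ i, zpu (1 - (PowerSeries.X : PowerSeries ℚ) ^ (m.1 i)) (-(ks i))) := by
  obtain ⟨n, rfl⟩ : ∃ n', n = n' + 1 := ⟨n - 1, by omega⟩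
  ext N
  rw [evq, coeff_mk, coeff_mk, Fin.mk_zero,
    tsum_coeff_X_pow_mul n N fun f => ∏ i, zpu (1 - X ^ f i) (-ks i)]
  refine sum_congr rfl fun m _ => ?_
  rw [coeff_nestq_succ, map_sum]
end

section
/- For every n ≥ 1 and all natural numbers k₁,…,kₙ ∈ ℕ, the following identity holds in ℚ[[q]]: ∑_{m₁ > m₂ > ⋯ > mₙ > 0} q^{m₁} ∏_{j=1}^n (1−q^{m_j})^{k_j} = ∑_{l₁=0}^{k₁} ⋯ ∑_{lₙ=0}^{kₙ} (∏_{j=1}^n (−1)^{l_j+1} C(k_j, l_j)) · ∏_{j=1}^n q^{L_j}/(q^{L_j}−1), where L_j := l₁ + ⋯ + l_j + 1 and q^{L}/(q^{L}−1) denotes the element −q^{L}·(1−q^{L})^{-1} of ℚ[[q]] (with (1−q^{L})^{-1} the inverse of the unit 1−q^{L}). -/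
/-!
Writing `m_j = ∑_{i ≥ j} (c_i + 1)` turns the strictly decreasing positive tuples `m` into
arbitrary tuples `c : Fin n → ℕ`. After the binomial expansion of each `(1 - q^{m_j})^{k_j}`,
the monomial `q^{m_1 + ∑ m_j l_j}` becomes `∏_j q^{L_j (c_j + 1)}`, so the sum over `c` factors
into the geometric series `∑_{c ≥ 0} q^{L (c + 1)} = q^L / (1 - q^L)`. All sums are taken in the
coefficientwise topology of `ℚ⟦X⟧`, where each coefficient sees only finitely many terms.
-/

open PowerSeries Finset
open PowerSeries.WithPiTopology

section Binomial

variable {R : Type*} [CommRing R]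

theorem one_sub_pow_eq_sum_fin (y : R) (r : ℕ) :
    (1 - y) ^ r = ∑ l : Fin (r + 1), (-1) ^ (l : ℕ) * (r.choose l : R) * y ^ (l : ℕ) := by
  rw [sub_eq_neg_add, add_pow,
    Fin.sum_univ_eq_sum_range (fun l => (-1 : R) ^ l * (r.choose l : R) * y ^ l)]
  refine sum_congr rfl fun l _ => ?_
  rw [neg_pow]
  ring

theorem pow_mul_prod_one_sub_pow_pow {ι : Type*} [Fintype ι] [DecidableEq ι]
    (x : R) (e : ℕ) (m k : ι → ℕ) :
    x ^ e * ∏ j, (1 - x ^ m j) ^ k j =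
      ∑ l : (∀ j, Fin (k j + 1)),
        (∏ j, (-1) ^ (l j : ℕ) * ((k j).choose (l j) : R)) * x ^ (e + ∑ j, m j * l j) := by
  simp_rw [one_sub_pow_eq_sum_fin, prod_univ_sum, Fintype.piFinset_univ, mul_sum]
  refine sum_congr rfl fun l _ => ?_
  simp_rw [pow_add, ← prod_pow_eq_pow_sum, pow_mul, prod_mul_distrib]
  ring

theorem prod_neg_one_pow_succ_mul_prod_neg_mul {ι : Type*} [Fintype ι] (l : ι → ℕ)
    (a x y : ι → R) :
    (∏ j, (-1) ^ (l j + 1) * a j) * ∏ j, -x j * y j =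
      (∏ j, (-1) ^ l j * a j) * ∏ j, x j * y j := by
  rw [← prod_mul_distrib, ← prod_mul_distrib]
  exact prod_congr rfl fun j _ => by ring

end Binomial

section Geometric

variable {K : Type*} [Field K]

theorem X_pow_dvd_geom_sub_sum_range {w : ℕ} (hw : 0 < w) (M : ℕ) :
    (X : K⟦X⟧) ^ M ∣ X ^ w * (1 - X ^ w)⁻¹ - ∑ t ∈ range M, X ^ (w * (t + 1)) := by
  set x : K⟦X⟧ := X ^ w
  have hinv : (1 - x) * (1 - x)⁻¹ = 1 :=
    PowerSeries.mul_inv_cancel _ (by simp [x, zero_pow hw.ne'])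
  have hgeom := mul_neg_geom_sum x M
  have hsum : ∑ t ∈ range M, (X : K⟦X⟧) ^ (w * (t + 1)) = x * ∑ t ∈ range M, x ^ t := by
    simp_rw [mul_sum, x, ← pow_mul, ← pow_add]
    ring_nf
  have htail : x * (1 - x)⁻¹ - ∑ t ∈ range M, (X : K⟦X⟧) ^ (w * (t + 1)) =
      x ^ M * (x * (1 - x)⁻¹) := by
    rw [hsum]
    linear_combination (x * ∑ t ∈ range M, x ^ t) * hinv - (x * (1 - x)⁻¹) * hgeom
  rw [htail, ← pow_mul]
  exact (pow_dvd_pow X (Nat.le_mul_of_pos_left M hw)).mul_right _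

theorem hasSum_X_pow_sum_mul_succ [TopologicalSpace K] {ι : Type*} [Fintype ι] {w : ι → ℕ}
    (hw : ∀ i, 0 < w i) :
    HasSum (fun c : ι → ℕ => (X : K⟦X⟧) ^ ∑ i, w i * (c i + 1))
      (∏ i, X ^ w i * (1 - X ^ w i)⁻¹) := by
  classical
  rw [hasSum_iff_hasSum_coeff]
  intro d
  set s := Fintype.piFinset fun _ : ι => range (d + 1)
  have hvanish : ∀ c ∉ s, coeff d ((X : K⟦X⟧) ^ ∑ i, w i * (c i + 1)) = 0 := by
    intro c hc
    obtain ⟨i, hi⟩ : ∃ i, d + 1 ≤ c i := by simpa [s, Fintype.mem_piFinset] using hc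
    have := single_le_sum (f := fun i => w i * (c i + 1)) (fun _ _ => Nat.zero_le _) (mem_univ i)
    rw [coeff_X_pow, if_neg]
    nlinarith [hw i]
  have htrunc : coeff d (∏ i, X ^ w i * (1 - X ^ w i)⁻¹) =
      coeff d (∏ i, ∑ t ∈ range (d + 1), (X : K⟦X⟧) ^ (w i * (t + 1))) := by
    have := SModEq.prod (I := Ideal.span {(X : K⟦X⟧) ^ (d + 1)}) (s := univ) fun i _ =>
      SModEq.sub_mem.mpr <|
        Ideal.mem_span_singleton.mpr (X_pow_dvd_geom_sub_sum_range (hw i) (d + 1))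
    rw [SModEq.sub_mem, Ideal.mem_span_singleton, X_pow_dvd_iff] at this
    exact sub_eq_zero.mp (by simpa using this d (lt_add_one d))
  rw [htrunc, prod_univ_sum, map_sum]
  simp_rw [prod_pow_eq_pow_sum]
  exact hasSum_sum_of_ne_finset_zero hvanish

end Geometric

namespace StrictAntiTuple

variable {n : ℕ}

def ofGaps (c : Fin n → ℕ) (j : Fin n) : ℕ := ∑ i ∈ Ici j, (c i + 1)

def nextValue (m : Fin n → ℕ) (j : Fin n) : ℕ :=
  if h : (j : ℕ) + 1 < n then m ⟨j + 1, h⟩ else 0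

def gaps (m : Fin n → ℕ) (j : Fin n) : ℕ := m j - nextValue m j - 1

theorem ofGaps_eq (c : Fin n → ℕ) (j : Fin n) :
    ofGaps c j = c j + 1 + nextValue (ofGaps c) j := by
  rw [ofGaps, ← Ioi_insert, sum_insert notMem_Ioi_self, nextValue]
  split_ifs with h
  · congr 2
    ext i
    simp only [mem_Ioi, mem_Ici, Fin.lt_def, Fin.le_def]
    omega
  · rw [sum_eq_zero fun i hi => absurd (mem_Ioi.mp hi) (by omega)]

theorem ofGaps_pos (c : Fin n → ℕ) (j : Fin n) : 0 < ofGaps c j := by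
  rw [ofGaps_eq]; omega

theorem ofGaps_strictAnti (c : Fin n → ℕ) : StrictAnti (ofGaps c) := fun _ _ hab =>
  sum_lt_sum_of_subset (Ici_subset_Ici.mpr hab.le) (mem_Ici.mpr le_rfl)
    (fun h => hab.not_ge (mem_Ici.mp h)) (Nat.succ_pos _) fun _ _ _ => Nat.zero_le _

theorem gaps_ofGaps (c : Fin n → ℕ) : gaps (ofGaps c) = c := by
  funext j
  have := ofGaps_eq c j
  rw [gaps]
  omega

theorem ofGaps_gaps {m : Fin n → ℕ} (hm : StrictAnti m) (hpos : ∀ i, 0 < m i) :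
    ofGaps (gaps m) = m := by
  funext j
  induction h : n - 1 - (j : ℕ) generalizing j with
  | zero =>
    have hlast : ¬ (j : ℕ) + 1 < n := by omega
    rw [ofGaps_eq, gaps, nextValue, nextValue, dif_neg hlast, dif_neg hlast]
    have := hpos j
    omega
  | succ t ih =>
    have hnext : (j : ℕ) + 1 < n := by omega
    rw [ofGaps_eq, gaps, nextValue, nextValue, dif_pos hnext, dif_pos hnext,
      ih _ (by dsimp only; omega)]
    have := hm (show j < ⟨j + 1, hnext⟩ from Fin.lt_def.mpr (Nat.lt_succ_self _))
    omega

def gapsEquiv (n : ℕ) : (Fin n → ℕ) ≃ {m : Fin n → ℕ // StrictAnti m ∧ ∀ i, 0 < m i} where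
  toFun c := ⟨ofGaps c, ofGaps_strictAnti c, ofGaps_pos c⟩
  invFun m := gaps m.1
  left_inv := gaps_ofGaps
  right_inv m := Subtype.ext (ofGaps_gaps m.2.1 m.2.2)

theorem ofGaps_zero_add_sum_mul (hn : 1 ≤ n) (c l : Fin n → ℕ) :
    ofGaps c ⟨0, hn⟩ + ∑ j, ofGaps c j * l j = ∑ j, ((∑ i ∈ Iic j, l i) + 1) * (c j + 1) := by
  have hfirst : Ici (⟨0, hn⟩ : Fin n) = univ := by
    ext i; simp [Fin.le_iff_val_le_val]
  have hswap : ∑ j, ∑ i ∈ Ici j, (c i + 1) * l j = ∑ i, ∑ j ∈ Iic i, (c i + 1) * l j :=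
    sum_comm' fun _ _ => by simp only [mem_univ, mem_Ici, mem_Iic, true_and, and_true]
  simp only [ofGaps, hfirst, sum_mul, hswap, ← mul_sum, ← sum_add_distrib]
  exact sum_congr rfl fun _ _ => by ring

end StrictAntiTuple

open StrictAntiTuple in
/-- For `k₁,…,kₙ ∈ ℕ`, the identity in `ℚ[[q]]`
`∑_{m₁ > ⋯ > mₙ > 0} q^{m₁} ∏ⱼ (1−q^{mⱼ})^{kⱼ}
  = ∑_{l₁=0}^{k₁} ⋯ ∑_{lₙ=0}^{kₙ} (∏ⱼ (−1)^{lⱼ+1} C(kⱼ,lⱼ)) · ∏ⱼ q^{Lⱼ}/(q^{Lⱼ}−1)`,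
where `Lⱼ = l₁ + ⋯ + lⱼ + 1` and `q^L/(q^L−1) = −q^L·(1−q^L)⁻¹`. The left-hand
`q`-adically convergent sum is expressed coefficientwise: its coefficient of `q^N` is the
(finitely supported) sum of the `q^N`-coefficients of the summands. -/
theorem stmt_7 (n : ℕ) (hn : 1 ≤ n) (k : Fin n → ℕ) :
    (PowerSeries.mk fun N =>
      ∑' m : {f : Fin n → ℕ // StrictAnti f ∧ ∀ i, 0 < f i},
        PowerSeries.coeff (R := ℚ) N
          ((PowerSeries.X : PowerSeries ℚ) ^ (m.1 ⟨0, hn⟩) *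
            ∏ j, (1 - (PowerSeries.X : PowerSeries ℚ) ^ (m.1 j)) ^ (k j))) =
    ∑ l : (∀ j : Fin n, Fin (k j + 1)),
      (∏ j, (-1 : PowerSeries ℚ) ^ ((l j : ℕ) + 1) * ((k j).choose (l j) : PowerSeries ℚ)) *
        ∏ j,
          (-((PowerSeries.X : PowerSeries ℚ) ^ ((∑ i ∈ Finset.Iic j, (l i : ℕ)) + 1)) *
            (1 - (PowerSeries.X : PowerSeries ℚ) ^
              ((∑ i ∈ Finset.Iic j, (l i : ℕ)) + 1))⁻¹) := by
  ext N
  rw [coeff_mk]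
  refine HasSum.tsum_eq ?_
  revert N
  -- a coefficientwise `tsum` is the sum in the pi topology of `ℚ⟦X⟧`
  rw [← hasSum_iff_hasSum_coeff, ← (gapsEquiv n).hasSum_iff]
  simp_rw [prod_neg_one_pow_succ_mul_prod_neg_mul]
  refine (hasSum_sum fun l _ => (hasSum_X_pow_sum_mul_succ fun _ => Nat.succ_pos _).mul_left
    (∏ j, (-1) ^ (l j : ℕ) * ((k j).choose (l j) : ℚ⟦X⟧))).congr_fun fun c => ?_
  rw [Function.comp_apply, gapsEquiv, Equiv.coe_fn_mk, pow_mul_prod_one_sub_pow_pow]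
  simp_rw [ofGaps_zero_add_sum_mul]
end

section
/- For every n ≥ 1, all k₁,…,kₙ ∈ ℕ₀, and every z ∈ ℂ with Re z < 0, the family (m₁,…,mₙ) ↦ m₁^{k₁}⋯mₙ^{kₙ}·e^{m₁ z} indexed by strictly decreasing n-tuples of positive integers m₁ > ⋯ > mₙ > 0 is summable, and its sum equals F_{(k₁,…,kₙ)}(z), where the functions F are defined on {z ∈ ℂ : Re z < 0} by F_{(kₙ)} := the kₙ-th iterated derivative of x, and F_{(k_j,…,kₙ)} := the k_j-th iterated derivative of the function z ↦ x(z)·F_{(k_{j+1},…,kₙ)}(z). In other words, the t-regularized multiple polylogarithm at non-positive arguments satisfies Li_{−k₁,…,−kₙ}(e^z) = ∂_z^{k₁}[x·∂_z^{k₂}[x ⋯ ∂_z^{kₙ}[x]]⋯](z). -/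
open Complex

/-- The function `x(z) = e^z/(1 - e^z)`. -/
noncomputable def xFun (z : ℂ) : ℂ := Complex.exp z / (1 - Complex.exp z)

/-- `F (k₁ :: … :: kₙ) = ∂^{k₁}[x·∂^{k₂}[x ⋯ ∂^{kₙ}[x]]⋯]`, defined by
`F [] = 1` and `F (k :: ks) = ∂^k (x · F ks)`. -/
noncomputable def F : List ℕ → ℂ → ℂ
  | [] => fun _ => 1
  | k :: ks => iteratedDeriv k fun z => xFun z * F ks z

/-!
Expanding `x(z) = ∑_{j ≥ 1} e^{jz}` as a geometric series, the identity for `(0, k₂, …, kₙ)` is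
the Cauchy product of this series with the one for `(k₂, …, kₙ)`: a strictly decreasing tuple
`m₁ > m₂ > ⋯ > mₙ` is the same as its tail together with the gap `m₁ - m₂ ≥ 1`, and
`e^{m₁ z} = e^{(m₁ - m₂) z} e^{m₂ z}`. Raising `k₁` by one is differentiation in `z`, which the
series allows termwise (it converges locally uniformly on `Re z < 0`) and which multiplies each
term by `m₁`. Induction on `n`, and on `k₁` inside, starting from the empty tuple with sum
`1 = F []`.
-/

open Finset Filter Topology

lemma Finset.sup_univ_eq_of_antitone {α : Type*} [SemilatticeSup α] [OrderBot α] {n : ℕ}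
    {f : Fin n → α} (hf : Antitone f) (hn : 0 < n) : univ.sup f = f ⟨0, hn⟩ :=
  le_antisymm (Finset.sup_le fun i _ => hf (Nat.zero_le i.val)) (le_sup (mem_univ _))

lemma hasSum_xFun {z : ℂ} (hz : z.re < 0) :
    HasSum (fun j : ℕ => exp z ^ (j + 1)) (xFun z) := by
  have hq : ‖exp z‖ < 1 := by rwa [norm_exp, Real.exp_lt_one_iff]
  have h := (hasSum_geometric_of_norm_lt_one hq).mul_left (exp z)
  simpa only [xFun, div_eq_mul_inv, pow_succ', mul_comm] using h

lemma F_cons_zero (l : List ℕ) : F (0 :: l) = fun z => xFun z * F l z :=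
  iteratedDeriv_zero

lemma F_cons_succ (k : ℕ) (l : List ℕ) : F ((k + 1) :: l) = deriv (F (k :: l)) :=
  iteratedDeriv_succ

lemma hasSum_deriv_of_hasSum_exp {ι : Type*} {a : ι → ℂ} {N : ι → ℕ} {G : ℂ → ℂ}
    (hsum : ∀ w : ℂ, w.re < 0 → Summable fun i => ‖a i * exp (N i * w)‖)
    (hG : ∀ w : ℂ, w.re < 0 → HasSum (fun i => a i * exp (N i * w)) (G w))
    {z : ℂ} (hz : z.re < 0) :
    HasSum (fun i => N i * (a i * exp (N i * z))) (deriv G z) := by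
  obtain ⟨s, hzs, hs⟩ : ∃ s : ℝ, z.re < s ∧ s < 0 := ⟨z.re / 2, by linarith, by linarith⟩
  have hderiv (i : ι) (w : ℂ) :
      HasDerivAt (fun w => a i * exp (N i * w)) (N i * (a i * exp (N i * w))) w := by
    have h := (((hasDerivAt_id w).const_mul (N i : ℂ)).cexp).const_mul (a i)
    simp only [id, mul_one] at h
    exact h.congr_deriv (by ring)
  have hbound (i : ι) (w : ℂ) (hw : w ∈ {w : ℂ | w.re < s}) :
      ‖a i * exp (N i * w)‖ ≤ ‖a i * exp (N i * (s : ℂ))‖ := by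
    have hre (v : ℂ) : (N i * v).re = N i * v.re := by simp
    rw [norm_mul, norm_mul, norm_exp, norm_exp, hre, hre, ofReal_re]
    gcongr
    exact hw.le
  have hopen (t : ℝ) : IsOpen {w : ℂ | w.re < t} := isOpen_lt continuous_re continuous_const
  have key := hasSum_deriv_of_summable_norm (hsum s (by rwa [ofReal_re]))
    (fun i w _ => (hderiv i w).differentiableAt.differentiableWithinAt) (hopen s) hbound hzs
  have hG_eq : G =ᶠ[𝓝 z] fun w => ∑' i, a i * exp (N i * w) :=
    eventually_of_mem ((hopen 0).mem_nhds hz) fun w hw => (hG w hw).tsum_eq.symm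
  rw [hG_eq.deriv_eq]
  simpa only [(hderiv _ z).deriv] using key

abbrev DecTuple (n : ℕ) := {f : Fin n → ℕ // StrictAnti f ∧ ∀ i, 0 < f i}

namespace DecTuple

variable {n : ℕ}

instance : Unique (DecTuple 0) where
  default := ⟨Fin.elim0, fun i => i.elim0, fun i => i.elim0⟩
  uniq _ := Subtype.ext (funext fun i => i.elim0)

lemma sup_tail_lt (m : DecTuple (n + 1)) : univ.sup (Fin.tail m.1) < m.1 0 :=
  (Finset.sup_lt_iff (m.2.2 0)).2 fun j _ => m.2.1 (Fin.succ_pos j)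

lemma cons_mem {a : ℕ} (t : DecTuple n) (ha : univ.sup t.1 < a) :
    StrictAnti (Fin.cons a t.1 : Fin (n + 1) → ℕ) ∧
      ∀ i, 0 < (Fin.cons a t.1 : Fin (n + 1) → ℕ) i :=
  ⟨Fin.strictMono_cons (α := ℕᵒᵈ) |>.2 ⟨fun j => (le_sup (mem_univ j)).trans_lt ha, t.2.1⟩,
    Fin.forall_fin_succ.2 ⟨by simpa using (Nat.zero_le _).trans_lt ha, t.2.2⟩⟩

def consEquiv : ℕ × DecTuple n ≃ DecTuple (n + 1) where
  toFun p := ⟨Fin.cons (univ.sup p.2.1 + p.1 + 1) p.2.1, cons_mem p.2 (by omega)⟩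
  invFun m := (m.1 0 - univ.sup (Fin.tail m.1) - 1,
    ⟨Fin.tail m.1, fun _ _ h => m.2.1 (Fin.succ_lt_succ_iff.2 h), fun _ => m.2.2 _⟩)
  left_inv p := by ext <;> simp; omega
  right_inv m := by
    have := sup_tail_lt m
    ext i
    refine Fin.cases ?_ (fun j => ?_) i <;> simp [Fin.tail]
    omega

lemma sup_consEquiv (p : ℕ × DecTuple n) :
    univ.sup (consEquiv p).1 = univ.sup p.2.1 + p.1 + 1 := by
  simpa [consEquiv, Fin.univ_succ] using fun i => (le_sup (mem_univ i)).trans (by omega)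

lemma summable_pow_mul_geometric (K : ℕ) {r : ℝ} (hr0 : 0 ≤ r) (hr1 : r < 1) :
    ∀ n, Summable fun m : DecTuple n => ((univ.sup m.1 + 1 : ℕ) : ℝ) ^ K * r ^ univ.sup m.1
  | 0 => .of_finite
  | n + 1 => by
    rw [← consEquiv.summable_iff]
    simp only [Function.comp_def, sup_consEquiv]
    have hgeom : Summable fun j : ℕ => ((j + 1 : ℕ) : ℝ) ^ K * r ^ (j + 1) :=
      (summable_nat_add_iff (f := fun j : ℕ => (j : ℝ) ^ K * r ^ j) 1).2
        (summable_pow_mul_geometric_of_norm_lt_one K (by rwa [Real.norm_of_nonneg hr0]))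
    refine .of_nonneg_of_le (fun _ => by positivity) (fun p => ?_)
      ((hgeom.mul_of_nonneg (summable_pow_mul_geometric K hr0 hr1 n) (fun _ => by positivity)
        (fun _ => by positivity)).mul_left (2 ^ K))
    obtain ⟨j, t⟩ := p
    set h := univ.sup t.1
    have hsplit : ((h + j + 1 + 1 : ℕ) : ℝ) ^ K ≤
        2 ^ K * (((h + 1 : ℕ) : ℝ) ^ K * ((j + 1 : ℕ) : ℝ) ^ K) := by
      rw [← mul_pow, ← mul_pow]
      gcongr
      norm_cast
      nlinarith
    calc ((h + j + 1 + 1 : ℕ) : ℝ) ^ K * r ^ (h + j + 1)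
        ≤ 2 ^ K * (((h + 1 : ℕ) : ℝ) ^ K * ((j + 1 : ℕ) : ℝ) ^ K) * (r ^ h * r ^ (j + 1)) := by
          rw [← pow_add, ← add_assoc]
          exact mul_le_mul_of_nonneg_right hsplit (by positivity)
      _ = _ := by ring

variable (c : Fin n → ℕ) (z : ℂ)

/-- `m₁` is written as the maximum `univ.sup m` of the entries, so that the empty tuple
contributes `1`. -/
noncomputable def term (m : DecTuple n) : ℂ := (∏ i, (m.1 i : ℂ) ^ c i) * exp (univ.sup m.1 * z)

lemma norm_term (m : DecTuple n) :
    ‖term c z m‖ = (∏ i, (m.1 i : ℝ) ^ c i) * Real.exp z.re ^ univ.sup m.1 := by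
  simp [term, norm_prod, norm_exp, ← Real.exp_nat_mul]

variable {z} in
lemma summable_norm_term (hz : z.re < 0) : Summable fun m => ‖term c z m‖ := by
  refine .of_nonneg_of_le (fun _ => norm_nonneg _) (fun m => ?_)
    (summable_pow_mul_geometric (∑ i, c i) (Real.exp_pos _).le (Real.exp_lt_one_iff.2 hz) n)
  rw [norm_term, ← prod_pow_eq_pow_sum]
  gcongr with i
  exact_mod_cast (le_sup (mem_univ i)).trans (Nat.le_succ _)

lemma term_consEquiv_cons_zero (p : ℕ × DecTuple n) :
    term (Fin.cons 0 c) z (consEquiv p) = exp z ^ (p.1 + 1) * term c z p.2 := by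
  simp only [term, sup_consEquiv, Fin.prod_univ_succ]
  simp only [consEquiv, Equiv.coe_fn_mk, Fin.cons_zero, Fin.cons_succ, pow_zero, one_mul,
    ← exp_nat_mul]
  rw [show ((univ.sup p.2.1 + p.1 + 1 : ℕ) : ℂ) * z = (p.1 + 1 : ℕ) * z + univ.sup p.2.1 * z by
    push_cast; ring, exp_add]
  ring

lemma term_cons_succ (k : ℕ) (m : DecTuple (n + 1)) :
    term (Fin.cons (k + 1) c) z m = univ.sup m.1 * term (Fin.cons k c) z m := by
  simp only [term, Fin.prod_univ_succ, Fin.cons_zero, Fin.cons_succ,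
    sup_univ_eq_of_antitone m.2.1.antitone n.succ_pos, Fin.zero_eta]
  ring

end DecTuple

theorem DecTuple.hasSum_term :
    ∀ (n : ℕ) (c : Fin n → ℕ) {z : ℂ}, z.re < 0 → HasSum (term c z) (F (List.ofFn c) z)
  | 0, c, z, _ => by
    convert hasSum_unique (term c z)
    simp [term, F]
  | n + 1, c, z, hz => by
    induction c using Fin.consCases with
    | _ k c =>
    rw [List.ofFn_cons]
    induction k generalizing z with
    | zero =>
      have hgeom : Summable fun j : ℕ => ‖exp z ^ (j + 1)‖ := by
        simpa [norm_pow] using (summable_nat_add_iff 1).2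
          (summable_geometric_of_lt_one (norm_nonneg _) (by rwa [norm_exp, Real.exp_lt_one_iff]))
      have hprod := (hasSum_xFun hz).mul (hasSum_term n c hz)
        (summable_mul_of_summable_norm (f := fun j : ℕ => exp z ^ (j + 1)) hgeom
          (summable_norm_term c hz))
      rw [F_cons_zero, ← consEquiv.hasSum_iff]
      simpa only [Function.comp_def, term_consEquiv_cons_zero] using hprod
    | succ k ih =>
      rw [F_cons_succ, funext (term_cons_succ c z k)]
      exact hasSum_deriv_of_hasSum_exp (fun _ => summable_norm_term _) ih hz

/-- For `k₁,…,kₙ ∈ ℕ₀` and `Re z < 0`, the family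
`(m₁,…,mₙ) ↦ m₁^{k₁}⋯mₙ^{kₙ}·e^{m₁ z}` over strictly decreasing `n`-tuples of positive
integers is summable with sum `∂_z^{k₁}[x·∂_z^{k₂}[x ⋯ ∂_z^{kₙ}[x]]⋯](z)`, i.e.
`Li_{-k₁,…,-kₙ}(e^z) = ∂_z^{k₁}[x·∂_z^{k₂}[x ⋯ ∂_z^{kₙ}[x]]⋯](z)`. -/
theorem stmt_16 (n : ℕ) (hn : 1 ≤ n) (k : Fin n → ℕ) (z : ℂ) (hz : z.re < 0) :
    HasSum (fun m : {f : Fin n → ℕ // StrictAnti f ∧ ∀ i, 0 < f i} =>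
      (∏ i, (m.1 i : ℂ) ^ (k i)) * Complex.exp ((m.1 ⟨0, hn⟩ : ℕ) * z))
      (F (List.ofFn k) z) := by
  convert DecTuple.hasSum_term n k hz using 1
  ext m
  rw [DecTuple.term, sup_univ_eq_of_antitone m.2.1.antitone hn]
end

section
/- For all a, b ∈ ℕ₀ with a + b odd: ∑_{m=0}^{a} (a! / ((a−m)!·(m+1)!)) · B'_{m+1} · B'_{a−m+b+1}/(a−m+b+1) = (1/2)·(1 + [b = 0]) · B'_{a+b+1}/(a+b+1), where [b = 0] equals 1 if b = 0 and 0 otherwise. (This identity expresses that the constant term of the Laurent expansion at 0 of ∂_z^a(x(z)·∂_z^b x(z)), with x(z) = e^z/(1−e^z), equals the value ζ₂(−a,−b) = (1/2)(1+δ₀(b))·B_{a+b+1}/(a+b+1) of the meromorphic continuation of the double zeta function.) -/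
/-!
`B'_n` vanishes for odd `n > 1`. The two Bernoulli indices `m + 1` and `a - m + b + 1` of each
summand add up to the odd number `a + b + 2`, so one of them is odd, and the summand vanishes
unless one of the indices is `1`: that is `m = 0`, and also `m = a` when `b = 0`. These one or
two surviving terms, with `B'_1 = 1/2`, give the right-hand side.
-/

theorem bernoulli'_mul_bernoulli'_eq_zero_of_odd_add {i j : ℕ} (h : Odd (i + j)) (hi : 1 < i)
    (hj : 1 < j) : bernoulli' i * bernoulli' j = 0 := by
  rcases Nat.even_or_odd i with hi' | hi'
  · rw [bernoulli'_eq_zero_of_odd ((Nat.odd_add'.mp h).mpr hi') hj, mul_zero]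
  · rw [bernoulli'_eq_zero_of_odd hi' hi, zero_mul]

namespace BernoulliConvolution

def term (a b m : ℕ) : ℚ :=
  ((a.factorial : ℚ) / ((a - m).factorial * (m + 1).factorial)) *
    bernoulli' (m + 1) * (bernoulli' (a - m + b + 1) / (a - m + b + 1))

theorem term_eq_zero {a b m : ℕ} (h : Odd (a + b)) (hma : m ≤ a) (hm : m ≠ 0)
    (hb : b ≠ 0 ∨ m ≠ a) : term a b m = 0 := by
  have hodd : Odd (m + 1 + (a - m + b + 1)) := by
    rw [show m + 1 + (a - m + b + 1) = a + b + 2 by omega]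
    exact h.add_even even_two
  have hprod := bernoulli'_mul_bernoulli'_eq_zero_of_odd_add hodd (by omega) (by omega)
  unfold term
  linear_combination
    (a.factorial : ℚ) / ((a - m).factorial * (m + 1).factorial) / (a - m + b + 1) * hprod

theorem term_zero (a b : ℕ) :
    term a b 0 = 1 / 2 * (bernoulli' (a + b + 1) / (a + b + 1)) := by
  have hfa : (a.factorial : ℚ) ≠ 0 := by positivity
  simp [term, bernoulli'_one, hfa]

theorem term_self_zero (a : ℕ) : term a 0 a = 1 / 2 * (bernoulli' (a + 1) / (a + 1)) := by
  have hfa1 : ((a + 1).factorial : ℚ) = (a + 1) * a.factorial := by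
    push_cast [Nat.factorial_succ]; ring
  have hfa : (a.factorial : ℚ) ≠ 0 := by positivity
  simp only [term, Nat.sub_self, Nat.factorial_zero, Nat.cast_one, one_mul, hfa1, zero_add,
    CharP.cast_eq_zero, bernoulli'_one]
  field_simp
  ring

end BernoulliConvolution

open BernoulliConvolution in
/-- For `a + b` odd, the Bernoulli-number identity
`∑_{m=0}^{a} (a!/((a−m)!·(m+1)!))·B'_{m+1}·B'_{a−m+b+1}/(a−m+b+1)
  = (1/2)·(1 + [b = 0])·B'_{a+b+1}/(a+b+1)`,
expressing that the constant term of the Laurent expansion at `0` of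
`∂_z^a(x(z)·∂_z^b x(z))`, `x(z) = e^z/(1−e^z)`, equals `ζ₂(−a,−b)`. -/
theorem stmt_17 (a b : ℕ) (h : Odd (a + b)) :
    ∑ m ∈ Finset.range (a + 1),
      ((a.factorial : ℚ) / ((a - m).factorial * (m + 1).factorial)) *
        bernoulli' (m + 1) * (bernoulli' (a - m + b + 1) / (a - m + b + 1)) =
    (1 / 2) * (1 + if b = 0 then 1 else 0) * (bernoulli' (a + b + 1) / (a + b + 1)) := by
  change ∑ m ∈ Finset.range (a + 1), term a b m = _
  rcases eq_or_ne b 0 with rfl | hb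
  · have ha : a ≠ 0 := by rintro rfl; simp at h
    have hsub : {0, a} ⊆ Finset.range (a + 1) := by simp [Finset.insert_subset_iff]
    have hrest : ∀ m ∈ Finset.range (a + 1), m ∉ ({0, a} : Finset ℕ) → term a 0 m = 0 := by
      intro m hm hm'
      obtain ⟨hm0, hma⟩ : m ≠ 0 ∧ m ≠ a := by simpa using hm'
      exact term_eq_zero h (Finset.mem_range_succ_iff.mp hm) hm0 (Or.inr hma)
    rw [← Finset.sum_subset hsub hrest, Finset.sum_pair ha.symm, term_zero, term_self_zero, if_pos rfl]
    ring
  · have hrest : ∀ m ∈ Finset.range (a + 1), m ≠ 0 → term a b m = 0 := fun m hm hm0 ↦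
      term_eq_zero h (Finset.mem_range_succ_iff.mp hm) hm0 (Or.inl hb)
    rw [Finset.sum_eq_single 0 hrest (by simp), term_zero, if_neg hb]
    ring
end
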